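/- arXiv:1303.4938 — 2 statements merged into one kernel-verified Lean document; each statement's English description precedes it below -/
import Mathlib

section
/- Let Λ ⊆ ℂ be a lattice and let ω, ω' ∈ ℂ be nonzero with ω·Λ ⊆ Λ and ω'·Λ ⊆ Λ. Suppose k is a positive integer with ω^k = −ω'^k. Then for every n ≥ 0, the diagonal Δ' satisfies (φ_ω × φ_{ω'})^{n+k}(Δ') = (φ_ω × φ_{ω'})^{n}(Δ') (so Δ' is pre-periodic with pair (n,k)), but ([ω] × [ω'])^{n+k}(Δ) ≠ ([ω] × [ω'])^{n}(Δ) (so Δ is not pre-periodic with the pair (n,k)). -/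
open Complex

noncomputable section

/-- The analytic model `E = ℂ/Λ` of an elliptic curve with period lattice `Λ`. -/
abbrev EC (Λ : AddSubgroup ℂ) : Type := ℂ ⧸ Λ

/-- The endomorphism `[ω] : E → E` induced by multiplication by `ω` on `ℂ`,
for `ω` with `ω·Λ ⊆ Λ`. -/
def mulE (Λ : AddSubgroup ℂ) (ω : ℂ) (hω : ∀ x ∈ Λ, ω * x ∈ Λ) : EC Λ →+ EC Λ :=
  QuotientAddGroup.map Λ Λ (AddMonoidHom.mulLeft ω) (fun x hx => hω x hx)

/-- The relation identifying a point of `E` with its negative. -/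
def negRel (Λ : AddSubgroup ℂ) (x y : EC Λ) : Prop := x = y ∨ x = -y

/-- The quotient `E/±` of `E` by the involution `z ↦ -z`. -/
abbrev ECpm (Λ : AddSubgroup ℂ) : Type := Quot (negRel Λ)

/-- The quotient map `q : E → E/±`. -/
def qpm (Λ : AddSubgroup ℂ) : EC Λ → ECpm Λ := Quot.mk _

/-- The Lattès-type map `φ_ω : E/± → E/±` induced by `[ω]`. -/
def lattes (Λ : AddSubgroup ℂ) (ω : ℂ) (hω : ∀ x ∈ Λ, ω * x ∈ Λ) :
    ECpm Λ → ECpm Λ :=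
  Quot.map (mulE Λ ω hω) (by
    intro x y h
    rcases h with h | h
    · exact Or.inl (by rw [h])
    · exact Or.inr (by rw [h, map_neg]))

/-!
Since `ω ^ k = -ω' ^ k`, the `k`-th iterates of `[ω]` and `[ω']` differ only by a sign. The
quotient `E/±` forgets the sign, so `φ_ω^k = φ_ω'^k` is a surjection that maps `Δ'` onto itself.
On `E` the sign survives: if `([ω] × [ω'])^(n+k)(Δ) = ([ω] × [ω'])^n(Δ)`, then
`[ω^n ω'^n] (z + z) = 0` for every `z`, so `E` would be a group of exponent two. A lattice rules
this out.
-/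

section Diagonal

variable {α : Type*}

theorem Set.image_prodMap_self_diagonal {β : Type*} {f : α → β} (hf : f.Surjective) :
    Prod.map f f '' Set.diagonal α = Set.diagonal β := by
  rw [← Set.range_diag, ← Set.range_comp, ← Set.range_diag]
  exact hf.range_comp Function.diag

theorem Set.image_iterate_prodMap_diagonal (f g : α → α) (m : ℕ) :
    (Prod.map f g)^[m] '' Set.diagonal α = Set.range fun x => (f^[m] x, g^[m] x) := by
  rw [Prod.map_iterate, ← Set.range_diag, ← Set.range_comp]
  rfl

/-- Once `f^[k] = g^[k]` is onto, `(f × g)^[k]` maps the diagonal onto itself. -/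
theorem Set.image_iterate_add_prodMap_diagonal {f g : α → α} {k : ℕ} (hfg : f^[k] = g^[k])
    (hf : (f^[k]).Surjective) (n : ℕ) :
    (Prod.map f g)^[n + k] '' Set.diagonal α = (Prod.map f g)^[n] '' Set.diagonal α := by
  rw [Function.iterate_add, Set.image_comp, Prod.map_iterate f g k, ← hfg,
    Set.image_prodMap_self_diagonal hf]

end Diagonal

/-- If `F^k = -G^k`, a point `(F^n z, G^n z)` of `(F × G)^n(Δ)` that also lies in
`(F × G)^(n+k)(Δ)` is `(-F^n u, G^n u)` with `u = G^k w`; commutativity then kills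
`F^n G^n (z + z)`. -/
theorem AddMonoidHom.iterate_add_self_eq_zero_of_image_diagonal_eq {A : Type*} [AddCommGroup A]
    {F G : A →+ A} (hFG : Function.Commute F G) {k : ℕ} (hpow : ∀ x, F^[k] x = -G^[k] x)
    {n : ℕ} (h : (Prod.map F G)^[n + k] '' Set.diagonal A = (Prod.map F G)^[n] '' Set.diagonal A)
    (z : A) : F^[n] (G^[n] z) + F^[n] (G^[n] z) = 0 := by
  rw [Set.image_iterate_prodMap_diagonal, Set.image_iterate_prodMap_diagonal] at h
  obtain ⟨w, hw⟩ : (F^[n] z, G^[n] z) ∈ Set.range fun x => (F^[n + k] x, G^[n + k] x) :=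
    h ▸ ⟨z, rfl⟩
  simp only [Function.iterate_add_apply, hpow, iterate_map_neg, Prod.mk.injEq] at hw
  obtain ⟨hF, hG⟩ := hw
  have hcomm := (hFG.iterate_iterate n n).eq
  calc F^[n] (G^[n] z) + F^[n] (G^[n] z)
      = F^[n] (G^[n] (G^[k] w)) + G^[n] (-F^[n] (G^[k] w)) := by rw [hG, hF, hcomm]
    _ = 0 := by rw [iterate_map_neg, hcomm, add_neg_cancel]

theorem exists_add_self_ne_zero_of_linearIndependent {V : Type*} [AddCommGroup V] [Module ℝ V]
    {v₁ v₂ : V} (hv : LinearIndependent ℝ ![v₁, v₂]) :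
    ∃ y : V ⧸ AddSubgroup.closure {v₁, v₂}, y + y ≠ 0 := by
  refine ⟨QuotientAddGroup.mk ((4⁻¹ : ℝ) • v₁), fun h => ?_⟩
  rw [← QuotientAddGroup.mk_add, QuotientAddGroup.eq_zero_iff, AddSubgroup.mem_closure_pair] at h
  obtain ⟨a, b, hab⟩ := h
  have hcomb : ((a : ℝ) - 2⁻¹) • v₁ + (b : ℝ) • v₂ = 0 := by
    rw [← Int.cast_smul_eq_zsmul ℝ, ← Int.cast_smul_eq_zsmul ℝ, ← add_smul] at hab
    rw [sub_smul, sub_add_eq_add_sub, hab, ← sub_smul]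
    norm_num
  have ha : (2 * a : ℝ) = 1 := by linarith [(LinearIndependent.pair_iff.mp hv _ _ hcomb).1]
  have : 2 * a = 1 := by exact_mod_cast ha
  omega

section Lattes

variable {Λ : AddSubgroup ℂ} {ω ω' : ℂ}

theorem pow_mul_mem_of_forall_mul_mem (hω : ∀ x ∈ Λ, ω * x ∈ Λ) (m : ℕ) :
    ∀ x ∈ Λ, ω ^ m * x ∈ Λ := by
  induction m with
  | zero => simp
  | succ m ih =>
    intro x hx
    rw [pow_succ', mul_assoc]
    exact hω _ (ih x hx)

theorem mulE_mk (hω : ∀ x ∈ Λ, ω * x ∈ Λ) (z : ℂ) :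
    mulE Λ ω hω (QuotientAddGroup.mk z) = QuotientAddGroup.mk (ω * z) :=
  rfl

theorem mulE_iterate (hω : ∀ x ∈ Λ, ω * x ∈ Λ) (m : ℕ) :
    (⇑(mulE Λ ω hω))^[m] = mulE Λ (ω ^ m) (pow_mul_mem_of_forall_mul_mem hω m) := by
  funext x
  induction x using QuotientAddGroup.induction_on
  induction m with
  | zero => simp [mulE_mk]
  | succ m ih =>
    rw [Function.iterate_succ_apply', ih, mulE_mk, mulE_mk, mulE_mk, pow_succ', mul_assoc]

theorem mulE_commute (hω : ∀ x ∈ Λ, ω * x ∈ Λ) (hω' : ∀ x ∈ Λ, ω' * x ∈ Λ) :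
    Function.Commute (mulE Λ ω hω) (mulE Λ ω' hω') := by
  intro x
  induction x using QuotientAddGroup.induction_on
  simp only [mulE_mk, mul_left_comm]

theorem mulE_surjective (hω : ∀ x ∈ Λ, ω * x ∈ Λ) (hω0 : ω ≠ 0) :
    Function.Surjective (mulE Λ ω hω) := by
  intro y
  induction y using QuotientAddGroup.induction_on with | H z => ?_
  exact ⟨QuotientAddGroup.mk (z / ω), by rw [mulE_mk, mul_div_cancel₀ z hω0]⟩

theorem mulE_iterate_eq_neg_of_pow_eq_neg_pow (hω : ∀ x ∈ Λ, ω * x ∈ Λ)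
    (hω' : ∀ x ∈ Λ, ω' * x ∈ Λ) {k : ℕ} (hpow : ω ^ k = -ω' ^ k) (x : EC Λ) :
    (⇑(mulE Λ ω hω))^[k] x = -(⇑(mulE Λ ω' hω'))^[k] x := by
  induction x using QuotientAddGroup.induction_on
  rw [mulE_iterate, mulE_iterate, mulE_mk, mulE_mk, hpow, neg_mul, QuotientAddGroup.mk_neg]

theorem qpm_neg (x : EC Λ) : qpm Λ (-x) = qpm Λ x :=
  Quot.sound (Or.inr rfl)

theorem lattes_semiconj (hω : ∀ x ∈ Λ, ω * x ∈ Λ) :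
    Function.Semiconj (qpm Λ) (mulE Λ ω hω) (lattes Λ ω hω) :=
  fun _ => rfl

theorem lattes_surjective (hω : ∀ x ∈ Λ, ω * x ∈ Λ) (hω0 : ω ≠ 0) :
    (lattes Λ ω hω).Surjective := by
  refine Function.Surjective.of_comp (g := qpm Λ) ?_
  rw [← (lattes_semiconj hω).comp_eq]
  exact Quot.mk_surjective.comp (mulE_surjective hω hω0)

theorem lattes_iterate_eq_of_pow_eq_neg_pow (hω : ∀ x ∈ Λ, ω * x ∈ Λ)
    (hω' : ∀ x ∈ Λ, ω' * x ∈ Λ) {k : ℕ} (hpow : ω ^ k = -ω' ^ k) :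
    (lattes Λ ω hω)^[k] = (lattes Λ ω' hω')^[k] := by
  funext x
  induction x using Quot.ind with | mk x => ?_
  rw [← qpm, ← ((lattes_semiconj hω).iterate_right k).eq,
    ← ((lattes_semiconj hω').iterate_right k).eq,
    mulE_iterate_eq_neg_of_pow_eq_neg_pow hω hω' hpow, qpm_neg]

end Lattes

theorem lattes_preperiodic_but_not_elliptic_of_pow_eq_neg_pow_general
    (ω₁ ω₂ : ℂ) (hind : LinearIndependent ℝ ![ω₁, ω₂])
    (Λ : AddSubgroup ℂ) (hΛ : Λ = AddSubgroup.closure {ω₁, ω₂})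
    (ω ω' : ℂ) (hω0 : ω ≠ 0) (hω'0 : ω' ≠ 0)
    (hω : ∀ x ∈ Λ, ω * x ∈ Λ) (hω' : ∀ x ∈ Λ, ω' * x ∈ Λ)
    (k : ℕ) (hpow : ω ^ k = -ω' ^ k) (n : ℕ) :
    (Prod.map (lattes Λ ω hω) (lattes Λ ω' hω'))^[n + k] '' Set.diagonal (ECpm Λ) =
      (Prod.map (lattes Λ ω hω) (lattes Λ ω' hω'))^[n] '' Set.diagonal (ECpm Λ) ∧
    (Prod.map ⇑(mulE Λ ω hω) ⇑(mulE Λ ω' hω'))^[n + k] '' Set.diagonal (EC Λ) ≠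
      (Prod.map ⇑(mulE Λ ω hω) ⇑(mulE Λ ω' hω'))^[n] '' Set.diagonal (EC Λ) := by
  refine ⟨Set.image_iterate_add_prodMap_diagonal (lattes_iterate_eq_of_pow_eq_neg_pow hω hω' hpow)
    ((lattes_surjective hω hω0).iterate k) n, fun h => ?_⟩
  subst hΛ
  obtain ⟨y, hy⟩ := exists_add_self_ne_zero_of_linearIndependent hind
  obtain ⟨z, rfl⟩ :=
    (((mulE_surjective hω hω0).iterate n).comp ((mulE_surjective hω' hω'0).iterate n)) y
  exact hy (AddMonoidHom.iterate_add_self_eq_zero_of_image_diagonal_eq (mulE_commute hω hω')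
    (mulE_iterate_eq_neg_of_pow_eq_neg_pow hω hω' hpow) h z)

/-- If `ω^k = -ω'^k` with `k > 0`, then for every `n` the diagonal `Δ'` is pre-periodic for
`φ_ω × φ_ω'` with pair `(n, k)`, but the diagonal `Δ` is not pre-periodic for `[ω] × [ω']`
with the pair `(n, k)`. -/
theorem lattes_preperiodic_but_not_elliptic_of_pow_eq_neg_pow
    (ω₁ ω₂ : ℂ) (hind : LinearIndependent ℝ ![ω₁, ω₂])
    (Λ : AddSubgroup ℂ) (hΛ : Λ = AddSubgroup.closure {ω₁, ω₂})
    (ω ω' : ℂ) (hω0 : ω ≠ 0) (hω'0 : ω' ≠ 0)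
    (hω : ∀ x ∈ Λ, ω * x ∈ Λ) (hω' : ∀ x ∈ Λ, ω' * x ∈ Λ)
    (k : ℕ) (hk : 0 < k) (hpow : ω ^ k = -ω' ^ k) (n : ℕ) :
    (Prod.map (lattes Λ ω hω) (lattes Λ ω' hω'))^[n + k] '' Set.diagonal (ECpm Λ) =
      (Prod.map (lattes Λ ω hω) (lattes Λ ω' hω'))^[n] '' Set.diagonal (ECpm Λ) ∧
    (Prod.map ⇑(mulE Λ ω hω) ⇑(mulE Λ ω' hω'))^[n + k] '' Set.diagonal (EC Λ) ≠
      (Prod.map ⇑(mulE Λ ω hω) ⇑(mulE Λ ω' hω'))^[n] '' Set.diagonal (EC Λ) :=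
  lattes_preperiodic_but_not_elliptic_of_pow_eq_neg_pow_general ω₁ ω₂ hind Λ hΛ ω ω' hω0 hω'0 hω hω'
    k hpow n
end
end

section
/- Let Λ = ℤ + ℤi ⊆ ℂ be the Gaussian lattice and E = ℂ/Λ, and take ω = 2 + i and ω' = 1 − 2i (so that ω·Λ ⊆ Λ and ω'·Λ ⊆ Λ, and ω/ω' is a primitive fourth root of unity). Then the diagonal Δ ⊆ E × E satisfies ([ω] × [ω'])^{4}(Δ) = Δ but ([ω] × [ω'])^{2}(Δ) ≠ Δ; that is, Δ is pre-periodic for [ω] × [ω'] with pair (0,4) but not with pair (0,2). -/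
open Complex

noncomputable section

/-! The image of `Δ` under `([ω] × [ω'])^[n]` is the set of classes of `(ωⁿz, ω'ⁿz)`, `z ∈ ℂ`.
Since `1 - 2i = -i(2 + i)`, we have `ω'⁴ = ω⁴ ≠ 0`, so the fourth image is `Δ` again, while
`ω'² = -ω²`, so the second image lies in `{(x, -x)}`; it misses `(1/4, 1/4)` because
`1/2 ∉ ℤ + ℤi`. -/

lemma mulE_iterate_mk {Λ : AddSubgroup ℂ} {ω : ℂ} (hω : ∀ x ∈ Λ, ω * x ∈ Λ) (n : ℕ) (z : ℂ) :
    (mulE Λ ω hω)^[n] (z : EC Λ) = ((ω ^ n * z : ℂ) : EC Λ) := by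
  induction n generalizing z with
  | zero => simp
  | succ n ih =>
    rw [Function.iterate_succ_apply, show mulE Λ ω hω z = ((ω * z : ℂ) : EC Λ) from rfl, ih,
      pow_succ, mul_assoc]

section Diagonal

variable {Λ : AddSubgroup ℂ} {ω ω' : ℂ} (hω : ∀ x ∈ Λ, ω * x ∈ Λ) (hω' : ∀ x ∈ Λ, ω' * x ∈ Λ)

lemma prodMap_mulE_iterate_image_diagonal (n : ℕ) :
    (Prod.map (mulE Λ ω hω) (mulE Λ ω' hω'))^[n] '' Set.diagonal (EC Λ) =
      Set.range fun z : ℂ => (((ω ^ n * z : ℂ) : EC Λ), ((ω' ^ n * z : ℂ) : EC Λ)) := by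
  rw [Prod.map_iterate, ← Set.range_diag, ← Set.range_comp,
    ← QuotientAddGroup.mk_surjective.range_comp]
  simp only [Function.comp_def, Function.diag, Prod.map_apply, mulE_iterate_mk]

lemma prodMap_mulE_iterate_image_diagonal_eq_of_pow_eq {n : ℕ} (h : ω' ^ n = ω ^ n)
    (hn : ω ^ n ≠ 0) :
    (Prod.map (mulE Λ ω hω) (mulE Λ ω' hω'))^[n] '' Set.diagonal (EC Λ) =
      Set.diagonal (EC Λ) := by
  rw [prodMap_mulE_iterate_image_diagonal, h, ← Set.range_diag,
    ← QuotientAddGroup.mk_surjective.range_comp]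
  exact (mul_left_surjective₀ hn).range_comp fun z : ℂ => ((z : EC Λ), (z : EC Λ))

lemma prodMap_mulE_iterate_image_diagonal_ne_of_pow_eq_neg {n : ℕ} (h : ω' ^ n = -ω ^ n)
    (hΛ : (1 / 2 : ℂ) ∉ Λ) :
    (Prod.map (mulE Λ ω hω) (mulE Λ ω' hω'))^[n] '' Set.diagonal (EC Λ) ≠
      Set.diagonal (EC Λ) := by
  intro hdiag
  have hquarter : (((1 / 4 : ℂ) : EC Λ), ((1 / 4 : ℂ) : EC Λ)) ∈ Set.diagonal (EC Λ) := rfl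
  rw [← hdiag, prodMap_mulE_iterate_image_diagonal] at hquarter
  obtain ⟨z, hz⟩ := hquarter
  simp only [Prod.mk.injEq] at hz
  refine hΛ ((QuotientAddGroup.eq_zero_iff _).mp ?_)
  calc ((1 / 2 : ℂ) : EC Λ) = ((1 / 4 : ℂ) : EC Λ) + ((1 / 4 : ℂ) : EC Λ) := by
        rw [← QuotientAddGroup.mk_add]; norm_num
    _ = ((ω ^ n * z + ω' ^ n * z : ℂ) : EC Λ) := by rw [QuotientAddGroup.mk_add, hz.1, hz.2]
    _ = 0 := by rw [h, neg_mul, add_neg_cancel, QuotientAddGroup.mk_zero]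

end Diagonal

lemma closure_one_I_le_comap_re_intCast :
    AddSubgroup.closure {(1 : ℂ), I} ≤ (Int.castAddHom ℝ).range.comap reAddGroupHom := by
  rw [AddSubgroup.closure_le]
  rintro _ (rfl | rfl)
  · exact ⟨1, by simp [reAddGroupHom]⟩
  · exact ⟨0, by simp [reAddGroupHom]⟩

lemma half_notMem_closure_one_I : (1 / 2 : ℂ) ∉ AddSubgroup.closure {(1 : ℂ), I} := by
  intro h
  obtain ⟨n, hn⟩ := closure_one_I_le_comap_re_intCast h
  have h2n : (2 * n : ℝ) = 1 := by
    simp only [Int.coe_castAddHom, reAddGroupHom, AddMonoidHom.coe_mk, ZeroHom.coe_mk] at hn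
    norm_num [hn]
  have : 2 * n = 1 := by exact_mod_cast h2n
  omega

lemma one_sub_two_mul_I_eq : (1 - 2 * I : ℂ) = -I * (2 + I) := by
  linear_combination I_sq

lemma two_add_I_ne_zero : (2 + I : ℂ) ≠ 0 := by
  intro h
  simpa using congrArg re h

/-- For the Gaussian lattice `Λ = ℤ + ℤi`, `ω = 2 + i` and `ω' = 1 - 2i`, the diagonal
`Δ ⊆ E × E` satisfies `([ω] × [ω'])^[4] Δ = Δ` but `([ω] × [ω'])^[2] Δ ≠ Δ`:
it is pre-periodic with pair `(0, 4)` but not with pair `(0, 2)`. -/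
theorem gaussian_diagonal_period_four_not_two
    (Λ : AddSubgroup ℂ) (hΛ : Λ = AddSubgroup.closure {(1 : ℂ), Complex.I})
    (hω : ∀ x ∈ Λ, (2 + Complex.I) * x ∈ Λ)
    (hω' : ∀ x ∈ Λ, (1 - 2 * Complex.I) * x ∈ Λ) :
    (Prod.map ⇑(mulE Λ (2 + Complex.I) hω) ⇑(mulE Λ (1 - 2 * Complex.I) hω'))^[4] ''
        Set.diagonal (EC Λ) = Set.diagonal (EC Λ) ∧
    (Prod.map ⇑(mulE Λ (2 + Complex.I) hω) ⇑(mulE Λ (1 - 2 * Complex.I) hω'))^[2] ''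
        Set.diagonal (EC Λ) ≠ Set.diagonal (EC Λ) := by
  refine ⟨prodMap_mulE_iterate_image_diagonal_eq_of_pow_eq hω hω' ?_
      (pow_ne_zero 4 two_add_I_ne_zero),
    prodMap_mulE_iterate_image_diagonal_ne_of_pow_eq_neg hω hω' ?_
      (hΛ ▸ half_notMem_closure_one_I)⟩
  · rw [one_sub_two_mul_I_eq]; linear_combination (I ^ 2 - 1) * (2 + I) ^ 4 * I_sq
  · rw [one_sub_two_mul_I_eq]; linear_combination (2 + I) ^ 2 * I_sq
end
end
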